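/- Let f_1, …, f_K : ℝ^d → ℝ each be convex and differentiable with L-Lipschitz gradient, let f := (1/K) Σ_{k=1}^K f_k, and fix x⋆ ∈ ℝ^d. Fix x ∈ ℝ^d and table points x̃(1), …, x̃(K) ∈ ℝ^d, and define φ := (1/K) Σ_{k=1}^K ‖∇f_k(x̃(k)) − ∇f_k(x⋆)‖². For each j ∈ {1, …, K}, let φ_j denote the value of φ after the SAGA table update that replaces x̃(j) by x while leaving all other entries unchanged. Then the average over the uniformly random replacement index satisfies (1/K) Σ_{j=1}^K φ_j ≤ (1 − 1/K) φ + (2L/K) D_f(x, x⋆), where D_f(x, y) := f(x) − f(y) − ⟨∇f(y), x − y⟩ is the Bregman divergence of f. -/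

import Mathlib

open scoped RealInnerProductSpace BigOperators

open InnerProductSpace

variable {F : Type*} [NormedAddCommGroup F] [InnerProductSpace ℝ F] [CompleteSpace F]

lemma hasDerivAt_line (g : F → ℝ) (hg : Differentiable ℝ g) (x v : F) (t : ℝ) :
    HasDerivAt (fun s : ℝ => g (x + s • v)) ⟪gradient g (x + t • v), v⟫ t := by
  have h1 : HasDerivAt (fun s : ℝ => x + s • v) v t := by
    simpa using ((hasDerivAt_id t).smul_const v).const_add x
  have h2 := ((hg (x + t • v)).hasGradientAt.hasFDerivAt).comp_hasDerivAt t h1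
  exact h2

lemma convex_grad_ineq (g : F → ℝ) (hconv : ConvexOn ℝ Set.univ g)
    (hg : Differentiable ℝ g) (x y : F) :
    g x + ⟪gradient g x, y - x⟫ ≤ g y := by
  have hφ : ConvexOn ℝ Set.univ (fun t : ℝ => g (x + t • (y - x))) := by
    have := hconv.comp_affineMap (AffineMap.lineMap x y : ℝ →ᵃ[ℝ] F)
    simp only [Set.preimage_univ] at this
    refine this.congr fun t _ => ?_
    simp [AffineMap.lineMap_apply, add_comm]
  have hd := hasDerivAt_line g hg x (y - x) 0
  simp only [zero_smul, add_zero] at hd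
  have := hφ.le_slope_of_hasDerivAt (Set.mem_univ (0:ℝ)) (Set.mem_univ (1:ℝ))
    one_pos hd
  rw [slope_def_field] at this
  simp only [zero_smul, one_smul, add_zero] at this
  have h1 : x + (y - x) = y := by abel
  rw [h1] at this
  simp only [sub_zero, div_one] at this
  linarith

lemma descent_lemma (g : F → ℝ) (hg : Differentiable ℝ g) (L : ℝ) (hL : 0 < L)
    (hlip : ∀ a b, ‖gradient g a - gradient g b‖ ≤ L * ‖a - b‖) (x y : F) :
    g y ≤ g x + ⟪gradient g x, y - x⟫ + L / 2 * ‖y - x‖ ^ 2 := by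
  set v := y - x with hv
  have hgc : Continuous (gradient g) := by
    have : LipschitzWith L.toNNReal (gradient g) := by
      apply LipschitzWith.of_dist_le_mul
      intro a b
      simpa [dist_eq_norm, Real.coe_toNNReal L hL.le] using hlip a b
    exact this.continuous
  set φ' : ℝ → ℝ := fun t => ⟪gradient g (x + t • v), v⟫ with hφ'
  have hcont : Continuous φ' := by
    apply Continuous.inner
    · exact hgc.comp (by continuity)
    · exact continuous_const
  have hderiv : ∀ t ∈ Set.uIcc (0:ℝ) 1, HasDerivAt (fun s : ℝ => g (x + s • v)) (φ' t) t :=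
    fun t _ => hasDerivAt_line g hg x v t
  have hint : IntervalIntegrable φ' MeasureTheory.volume 0 1 := hcont.intervalIntegrable 0 1
  have hftc : ∫ t in (0:ℝ)..1, φ' t = g (x + (1:ℝ) • v) - g (x + (0:ℝ) • v) :=
    intervalIntegral.integral_eq_sub_of_hasDerivAt hderiv hint
  simp only [one_smul, zero_smul, add_zero] at hftc
  have hxy : x + v = y := by rw [hv]; abel
  rw [hxy] at hftc
  have hbound : ∀ t ∈ Set.Icc (0:ℝ) 1, φ' t ≤ φ' 0 + L * ‖v‖ ^ 2 * t := by
    intro t ht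
    have h0 : φ' t - φ' 0 = ⟪gradient g (x + t • v) - gradient g x, v⟫ := by
      simp [hφ', inner_sub_left]
    have h1 : ⟪gradient g (x + t • v) - gradient g x, v⟫ ≤
        ‖gradient g (x + t • v) - gradient g x‖ * ‖v‖ := real_inner_le_norm _ _
    have h2 : ‖gradient g (x + t • v) - gradient g x‖ ≤ L * (t * ‖v‖) := by
      have := hlip (x + t • v) x
      simpa [norm_smul, abs_of_nonneg ht.1] using this
    nlinarith [norm_nonneg v, norm_nonneg (gradient g (x + t • v) - gradient g x)]
  have hmono : ∫ t in (0:ℝ)..1, φ' t ≤ ∫ t in (0:ℝ)..1, (φ' 0 + L * ‖v‖ ^ 2 * t) := by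
    apply intervalIntegral.integral_mono_on (by norm_num) hint
    · exact (Continuous.intervalIntegrable (by continuity) 0 1)
    · exact hbound
  have hval : ∫ t in (0:ℝ)..1, (φ' 0 + L * ‖v‖ ^ 2 * t) = φ' 0 + L / 2 * ‖v‖ ^ 2 := by
    rw [intervalIntegral.integral_add (intervalIntegrable_const)
      ((by continuity : Continuous fun t : ℝ => L * ‖v‖ ^ 2 * t).intervalIntegrable 0 1)]
    rw [intervalIntegral.integral_const_mul, integral_id]
    simp
    ring
  have hφ'0 : φ' 0 = ⟪gradient g x, y - x⟫ := by simp [hφ', hv]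
  rw [hval] at hmono
  rw [hftc] at hmono
  rw [hφ'0] at hmono
  linarith

lemma grad_sq_le_bregman (g : F → ℝ) (hconv : ConvexOn ℝ Set.univ g)
    (hg : Differentiable ℝ g) (L : ℝ) (hL : 0 < L)
    (hlip : ∀ a b, ‖gradient g a - gradient g b‖ ≤ L * ‖a - b‖) (x y : F) :
    ‖gradient g x - gradient g y‖ ^ 2
      ≤ 2 * L * (g x - g y - ⟪gradient g y, x - y⟫) := by
  set a := gradient g y with ha
  set h : F → ℝ := fun z => g z - ⟪a, z⟫ with hh
  have hhd : Differentiable ℝ h := by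
    apply hg.sub
    exact (InnerProductSpace.toDual ℝ F a).differentiable
  have hgradh : ∀ z, gradient h z = gradient g z - a := by
    intro z
    have hfd : HasFDerivAt h ((InnerProductSpace.toDual ℝ F) (gradient g z - a)) z := by
      rw [map_sub]
      exact ((hg z).hasGradientAt.hasFDerivAt).sub
        ((InnerProductSpace.toDual ℝ F a).hasFDerivAt)
    rw [hfd.hasGradientAt.gradient]; exact (InnerProductSpace.toDual ℝ F).symm_apply_apply _
  have hliph : ∀ p q, ‖gradient h p - gradient h q‖ ≤ L * ‖p - q‖ := by
    intro p q
    rw [hgradh, hgradh]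
    simpa [sub_sub_sub_cancel_right] using hlip p q
  -- h has global minimum at y
  have hmin : ∀ z, h y ≤ h z := by
    intro z
    have := convex_grad_ineq g hconv hg y z
    simp only [hh]
    have hinner : ⟪a, z - y⟫ = ⟪a, z⟫ - ⟪a, y⟫ := inner_sub_right _ _ _
    rw [ha] at *
    linarith [hinner ▸ this]
  -- descent step on h
  set w := x - (1 / L) • gradient h x with hw
  have hdesc := descent_lemma h hhd L hL hliph x w
  have h1 : ⟪gradient h x, w - x⟫ = -(1/L) * ‖gradient h x‖ ^ 2 := by
    rw [hw]
    simp only [sub_sub_cancel_left]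
    rw [inner_neg_right, real_inner_smul_right, real_inner_self_eq_norm_sq]
    ring
  have h2 : ‖w - x‖ ^ 2 = (1/L)^2 * ‖gradient h x‖ ^ 2 := by
    rw [hw]
    simp only [sub_sub_cancel_left, norm_neg, norm_smul, mul_pow, Real.norm_eq_abs, sq_abs]
  rw [h1, h2] at hdesc
  have h3 : h y ≤ h w := hmin w
  have key : ‖gradient h x‖ ^ 2 ≤ 2 * L * (h x - h y) := by
    have hL2 : L ≠ 0 := hL.ne'
    have : L / 2 * ((1/L)^2 * ‖gradient h x‖^2) = 1/(2*L) * ‖gradient h x‖^2 := by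
      field_simp
    rw [this] at hdesc
    have h4 : h y ≤ h x + -(1/L) * ‖gradient h x‖ ^ 2 + 1/(2*L) * ‖gradient h x‖^2 :=
      le_trans h3 hdesc
    have h5 : -(1/L) * ‖gradient h x‖ ^ 2 + 1/(2*L) * ‖gradient h x‖^2
        = -(1/(2*L)) * ‖gradient h x‖^2 := by field_simp; ring
    have h6 : 1/(2*L) * ‖gradient h x‖^2 ≤ h x - h y := by linarith
    calc ‖gradient h x‖^2 = (2*L) * (1/(2*L) * ‖gradient h x‖^2) := by field_simp
      _ ≤ 2*L*(h x - h y) := mul_le_mul_of_nonneg_left h6 (by positivity)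
  have hhx : h x - h y = g x - g y - ⟪a, x - y⟫ := by
    simp only [hh]
    rw [inner_sub_right]
    ring
  rw [hgradh, hhx] at key
  exact key

/-- Bregman divergence of a differentiable function `f` on `ℝ^d`. -/
noncomputable def bregman {d : ℕ} (f : EuclideanSpace ℝ (Fin d) → ℝ)
    (x y : EuclideanSpace ℝ (Fin d)) : ℝ :=
  f x - f y - ⟪gradient f y, x - y⟫

lemma gradient_avg {d K : ℕ} (fk : Fin K → EuclideanSpace ℝ (Fin d) → ℝ)
    (hdiff : ∀ k, Differentiable ℝ (fk k)) (z : EuclideanSpace ℝ (Fin d)) :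
    gradient (fun x => (1 / (K : ℝ)) * ∑ k : Fin K, fk k x) z
      = (1 / (K : ℝ)) • ∑ k : Fin K, gradient (fk k) z := by
  have hfd : HasFDerivAt (fun x => (1 / (K : ℝ)) * ∑ k : Fin K, fk k x)
      ((InnerProductSpace.toDual ℝ _) ((1 / (K : ℝ)) • ∑ k : Fin K, gradient (fk k) z)) z := by
    rw [map_smul, map_sum]
    have hsum : HasFDerivAt (fun x => ∑ k : Fin K, fk k x)
        (∑ k : Fin K, (InnerProductSpace.toDual ℝ _) (gradient (fk k) z)) z :=
      HasFDerivAt.fun_sum fun k _ => ((hdiff k) z).hasGradientAt.hasFDerivAt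
    exact hsum.const_mul _
  rw [hfd.hasGradientAt.gradient]; exact (InnerProductSpace.toDual ℝ _).symm_apply_apply _

theorem saga_table_update_recursion {d K : ℕ} (hK : 0 < K)
    (fk : Fin K → EuclideanSpace ℝ (Fin d) → ℝ) (L : ℝ) (hL : 0 < L)
    (hconv : ∀ k, ConvexOn ℝ Set.univ (fk k))
    (hdiff : ∀ k, Differentiable ℝ (fk k))
    (hlip : ∀ k, ∀ x y, ‖gradient (fk k) x - gradient (fk k) y‖ ≤ L * ‖x - y‖)
    (f : EuclideanSpace ℝ (Fin d) → ℝ)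
    (hf : f = fun x => (1 / (K : ℝ)) * ∑ k : Fin K, fk k x)
    (xstar x : EuclideanSpace ℝ (Fin d)) (xt : Fin K → EuclideanSpace ℝ (Fin d))
    (φ : ℝ)
    (hφ : φ = (1 / (K : ℝ)) *
        ∑ k : Fin K, ‖gradient (fk k) (xt k) - gradient (fk k) xstar‖ ^ 2)
    (φ' : Fin K → ℝ)
    (hφ' : ∀ j : Fin K, φ' j = (1 / (K : ℝ)) *
        ∑ k : Fin K,
          ‖gradient (fk k) (if k = j then x else xt k) - gradient (fk k) xstar‖ ^ 2) :
    (1 / (K : ℝ)) * ∑ j : Fin K, φ' j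
      ≤ (1 - 1 / (K : ℝ)) * φ + (2 * L / (K : ℝ)) * bregman f x xstar := by
  have hKpos : (0:ℝ) < (K:ℝ) := Nat.cast_pos.mpr hK
  set S : ℝ := ∑ k : Fin K, ‖gradient (fk k) (xt k) - gradient (fk k) xstar‖ ^ 2 with hS
  set a : Fin K → ℝ := fun k => ‖gradient (fk k) x - gradient (fk k) xstar‖ ^ 2 with haa
  set b : Fin K → ℝ := fun k => ‖gradient (fk k) (xt k) - gradient (fk k) xstar‖ ^ 2 with hbb
  set T : ℝ := ∑ k : Fin K, a k with hT
  -- inner sums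
  have hsumj : ∀ j : Fin K,
      (∑ k : Fin K, ‖gradient (fk k) (if k = j then x else xt k) - gradient (fk k) xstar‖ ^ 2)
        = S - b j + a j := by
    intro j
    have hdiff2 : (∑ k : Fin K,
        ‖gradient (fk k) (if k = j then x else xt k) - gradient (fk k) xstar‖ ^ 2) - S
        = ∑ k : Fin K,
          (‖gradient (fk k) (if k = j then x else xt k) - gradient (fk k) xstar‖ ^ 2 - b k) := by
      rw [Finset.sum_sub_distrib]
    have hsingle : (∑ k : Fin K,
        (‖gradient (fk k) (if k = j then x else xt k) - gradient (fk k) xstar‖ ^ 2 - b k))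
        = a j - b j := by
      rw [Finset.sum_eq_single_of_mem j (Finset.mem_univ j)]
      · simp [haa, hbb]
      · intro k _ hk
        simp [hk, hbb]
    linarith [hdiff2, hsingle]
  -- bregman of sum
  have hbreg : bregman f x xstar = (1 / (K:ℝ)) * ∑ k : Fin K,
      (fk k x - fk k xstar - ⟪gradient (fk k) xstar, x - xstar⟫) := by
    rw [bregman, hf]
    rw [gradient_avg fk hdiff xstar]
    rw [real_inner_smul_left, sum_inner]
    rw [Finset.sum_sub_distrib, Finset.sum_sub_distrib]
    ring
  -- each term bounded
  have hterm : ∀ k : Fin K, a k ≤ 2 * L *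
      (fk k x - fk k xstar - ⟪gradient (fk k) xstar, x - xstar⟫) := by
    intro k
    exact grad_sq_le_bregman (fk k) (hconv k) (hdiff k) L hL (hlip k) x xstar
  have hTle : T ≤ 2 * L * ((K:ℝ) * bregman f x xstar) := by
    have h1 : T ≤ ∑ k : Fin K, 2 * L *
        (fk k x - fk k xstar - ⟪gradient (fk k) xstar, x - xstar⟫) :=
      Finset.sum_le_sum fun k _ => hterm k
    have h2 : (K:ℝ) * bregman f x xstar = ∑ k : Fin K,
        (fk k x - fk k xstar - ⟪gradient (fk k) xstar, x - xstar⟫) := by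
      rw [hbreg]; field_simp
    rw [h2, Finset.mul_sum]
    exact h1
  -- assemble
  have hLHS : (1 / (K : ℝ)) * ∑ j : Fin K, φ' j
      = (1 - 1/(K:ℝ)) * ((1/(K:ℝ)) * S) + (1/(K:ℝ))^2 * T := by
    have : ∑ j : Fin K, φ' j = (1/(K:ℝ)) * ((K:ℝ) * S - S + T) := by
      have h3 : ∀ j : Fin K, φ' j = (1/(K:ℝ)) * (S - b j + a j) := by
        intro j; rw [hφ' j, hsumj j]
      rw [Finset.sum_congr rfl fun j _ => h3 j]
      rw [← Finset.mul_sum]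
      congr 1
      rw [Finset.sum_add_distrib, Finset.sum_sub_distrib]
      simp [hT, Finset.card_univ]
      rfl
    rw [this]
    field_simp
  rw [hLHS, hφ]
  have hfinal : (1/(K:ℝ))^2 * T ≤ (2 * L / (K:ℝ)) * bregman f x xstar := by
    calc (1/(K:ℝ))^2 * T ≤ (1/(K:ℝ))^2 * (2 * L * ((K:ℝ) * bregman f x xstar)) := by
          apply mul_le_mul_of_nonneg_left hTle (by positivity)
      _ = (2 * L / (K:ℝ)) * bregman f x xstar := by field_simp
  linarith
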